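/- Let H be a complex Hilbert space and let T ∈ B(H) be log-hyponormal. Then T satisfies condition (∗): for every z ∈ ℂ and every sequence (x_n) of unit vectors in H, if ‖(T − z)x_n‖ → 0 as n → ∞, then ‖(T − z)^* x_n‖ → 0 as n → ∞. -/

import Mathlib

set_option linter.unusedSectionVars false
set_option maxHeartbeats 1000000

open ContinuousLinearMap Filter Topology

variable {H : Type*} [NormedAddCommGroup H] [InnerProductSpace ℂ H] [CompleteSpace H]

/-- The absolute value `|T| = (T^*T)^{1/2}` of a bounded operator, via the
continuous functional calculus. -/
noncomputable def opAbs (T : H →L[ℂ] H) : H →L[ℂ] H :=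
  cfc Real.sqrt (adjoint T * T)

/-- `T` is log-hyponormal: `T` is invertible and `log|T| ≥ log|T^*|`, logs via the
continuous functional calculus, and `≤` is the Loewner order. -/
def IsLogHyponormal (T : H →L[ℂ] H) : Prop :=
  IsUnit T ∧ cfc Real.log (opAbs (adjoint T)) ≤ cfc Real.log (opAbs T)

/-- Condition (∗): for every `z ∈ ℂ` and every sequence of unit vectors `xₙ`,
`‖(T - z)xₙ‖ → 0` implies `‖(T - z)^* xₙ‖ → 0`. -/
def CondStar (T : H →L[ℂ] H) : Prop :=
  ∀ (z : ℂ) (x : ℕ → H), (∀ n, ‖x n‖ = 1) →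
    Tendsto (fun n => ‖(T - z • 1) (x n)‖) atTop (𝓝 0) →
    Tendsto (fun n => ‖adjoint (T - z • 1) (x n)‖) atTop (𝓝 0)

namespace LogHypAux

/-! ### Scalar lemmas -/

lemma exp_quad_nonneg : ∀ x : ℝ, 0 ≤ x → x^2/2 ≤ Real.exp x - 1 - x := by
  have key : MonotoneOn (fun x : ℝ => Real.exp x - 1 - x - x^2/2) (Set.Ici 0) := by
    apply monotoneOn_of_deriv_nonneg (convex_Ici 0)
    · fun_prop
    · fun_prop
    · intro x hx
      rw [interior_Ici] at hx
      have h1 : HasDerivAt (fun x : ℝ => x^2/2) x x := by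
        simpa using (hasDerivAt_pow 2 x).div_const 2
      have h2 : HasDerivAt (fun x : ℝ => Real.exp x - 1 - x) (Real.exp x - 1) x :=
        ((Real.hasDerivAt_exp x).sub_const 1).sub (hasDerivAt_id x)
      rw [(show HasDerivAt (fun x : ℝ => Real.exp x - 1 - x - x^2/2) _ x from h2.sub h1).deriv]
      have := Real.add_one_le_exp x
      linarith
  intro x hx
  have := key (Set.self_mem_Ici) hx hx
  simp at this
  linarith

lemma exp_quad_nonpos : ∀ x : ℝ, x ≤ 0 → x^2/2 * Real.exp x ≤ Real.exp x - 1 - x := by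
  have key : AntitoneOn (fun x : ℝ => Real.exp x - 1 - x - x^2/2 * Real.exp x) (Set.Iic 0) := by
    apply antitoneOn_of_deriv_nonpos (convex_Iic 0)
    · fun_prop
    · fun_prop
    · intro x hx
      rw [interior_Iic] at hx
      have h1 : HasDerivAt (fun x : ℝ => x^2/2) x x := by
        simpa using (hasDerivAt_pow 2 x).div_const 2
      have hq : HasDerivAt (fun x : ℝ => x^2/2 * Real.exp x)
          (x * Real.exp x + x^2/2 * Real.exp x) x := by
        exact h1.mul (Real.hasDerivAt_exp x)
      have h2 : HasDerivAt (fun x : ℝ => Real.exp x - 1 - x) (Real.exp x - 1) x :=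
        ((Real.hasDerivAt_exp x).sub_const 1).sub (hasDerivAt_id x)
      rw [(show HasDerivAt (fun x : ℝ => Real.exp x - 1 - x - x^2/2 * Real.exp x) _ x from h2.sub hq).deriv]
      have h2' := Real.add_one_le_exp (-x)
      have h3 : (1 : ℝ) - x - x^2/2 ≤ Real.exp (-x) := by nlinarith [sq_nonneg x]
      have h4 : Real.exp x * (1 - x - x^2/2) ≤ Real.exp x * Real.exp (-x) := by
        rcases le_or_gt (1 - x - x^2/2) 0 with h|h
        · nlinarith [Real.exp_pos x, Real.exp_pos (-x),
            mul_pos (Real.exp_pos x) (Real.exp_pos (-x))]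
        · exact mul_le_mul_of_nonneg_left h3 (Real.exp_pos x).le
      rw [← Real.exp_add] at h4
      simp at h4
      linarith
  intro x hx
  have := key hx (Set.self_mem_Iic) hx
  simp at this
  linarith

lemma exp_quad (x R : ℝ) (hR : |x| ≤ R) : x^2/2 * Real.exp (-R) ≤ Real.exp x - 1 - x := by
  rcases le_or_gt 0 x with h|h
  · have := exp_quad_nonneg x h
    have h1 : Real.exp (-R) ≤ 1 := Real.exp_le_one_iff.mpr (by
      have := abs_nonneg x; linarith)
    nlinarith [sq_nonneg x]
  · have := exp_quad_nonpos x h.le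
    have h1 : Real.exp (-R) ≤ Real.exp x := Real.exp_le_exp.mpr (by
      rw [abs_of_neg h] at hR; linarith)
    nlinarith [sq_nonneg x]

lemma abs_sub_le_max_mul_log {a b : ℝ} (ha : 0 < a) (hb : 0 < b) :
    |a - b| ≤ max a b * |Real.log a - Real.log b| := by
  wlog h : b ≤ a generalizing a b
  · have := this hb ha (le_of_not_ge h)
    rw [abs_sub_comm, max_comm, abs_sub_comm (Real.log b)] at this
    exact this
  have hd : 0 ≤ Real.log a - Real.log b := by
    linarith [Real.log_le_log hb h]
  rw [abs_of_nonneg (by linarith), abs_of_nonneg hd, max_eq_left h]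
  set d := Real.log a - Real.log b with hdd
  have hab : a = b * Real.exp d := by
    rw [hdd, Real.exp_sub, Real.exp_log ha, Real.exp_log hb]
    field_simp
  have h1 : Real.exp d - 1 ≤ d * Real.exp d := by
    have hp := Real.exp_pos d
    have hm : Real.exp d * Real.exp (-d) = 1 := by rw [← Real.exp_add]; simp
    nlinarith [mul_le_mul_of_nonneg_left (Real.add_one_le_exp (-d)) hp.le]
  calc a - b = b * (Real.exp d - 1) := by rw [hab]; ring
    _ ≤ b * (d * Real.exp d) := mul_le_mul_of_nonneg_left h1 hb.le
    _ = a * d := by rw [hab]; ring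

lemma log_tangent {t s : ℝ} (ht : 0 < t) (hs : 0 < s) :
    Real.log t ≤ Real.log s - 1 + s⁻¹ * t := by
  have h := Real.log_le_sub_one_of_pos (x := t/s) (by positivity)
  rw [Real.log_div ht.ne' hs.ne'] at h
  have h2 : t/s = s⁻¹ * t := by ring
  rw [h2] at h
  linarith

lemma key_pointwise {cn L R0 : ℝ} (hc : |cn| ≤ R0) (hL : |L| ≤ R0) :
    Real.exp (-(2*cn)) + (-2 * Real.exp (-(2*cn))) * (L - cn)
      + (2 * Real.exp (-(2*R0)) * Real.exp (-(4*R0))) * ((L - cn) * (L - cn))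
      ≤ Real.exp (-(2*L)) := by
  set u := L - cn with hu
  have hub : |(-2) * u| ≤ 4*R0 := by
    rw [abs_mul]
    have : |u| ≤ 2 * R0 := by
      rw [hu]
      calc |L - cn| ≤ |L| + |cn| := abs_sub _ _
        _ ≤ 2 * R0 := by linarith
    simp only [abs_neg, abs_two]
    norm_num
    linarith
  have hq := exp_quad ((-2)*u) (4*R0) hub
  -- exp(-2u) - 1 - (-2u) ≥ ((-2u)^2/2) exp(-(4R0)) = 2u^2 exp(-(4R0))
  have hsplit : Real.exp (-(2*L)) = Real.exp (-(2*cn)) * Real.exp ((-2)*u) := by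
    rw [← Real.exp_add]
    congr 1
    rw [hu]; ring
  rw [hsplit]
  have hc1 : Real.exp (-(2*R0)) ≤ Real.exp (-(2*cn)) := by
    apply Real.exp_le_exp.mpr
    have := (abs_le.mp hc).2
    linarith
  have hpos := Real.exp_pos (-(2*cn))
  have hpos2 := Real.exp_pos (-(4*R0))
  clear_value u
  -- exp(-2cn) * exp(-2u) ≥ exp(-2cn) * (1 - 2u + 2 u^2 exp(-4R0))
  have h5 : 1 + ((-2)*u) + ((-2)*u)^2/2 * Real.exp (-(4*R0)) ≤ Real.exp ((-2)*u) := by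
    linarith
  have h6 : Real.exp (-(2*cn)) * (1 + ((-2)*u) + ((-2)*u)^2/2 * Real.exp (-(4*R0)))
      ≤ Real.exp (-(2*cn)) * Real.exp ((-2)*u) := mul_le_mul_of_nonneg_left h5 hpos.le
  have h7 : Real.exp (-(2*R0)) * (2 * Real.exp (-(4*R0)) * (u*u))
      ≤ Real.exp (-(2*cn)) * (2 * Real.exp (-(4*R0)) * (u*u)) := by
    apply mul_le_mul_of_nonneg_right hc1
    exact mul_nonneg (by positivity) (mul_self_nonneg u)
  have h6' : Real.exp (-(2*cn)) * (1 + ((-2)*u) + ((-2)*u)^2/2 * Real.exp (-(4*R0)))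
      = Real.exp (-(2*cn)) + (-2 * Real.exp (-(2*cn))) * u
        + (2 * Real.exp (-(2*cn)) * Real.exp (-(4*R0))) * (u*u) := by ring
  rw [h6'] at h6
  have h7' : Real.exp (-(2*R0)) * (2 * Real.exp (-(4*R0)) * (u*u))
      = (2 * Real.exp (-(2*R0)) * Real.exp (-(4*R0))) * (u*u) := by ring
  have h7'' : Real.exp (-(2*cn)) * (2 * Real.exp (-(4*R0)) * (u*u))
      = (2 * Real.exp (-(2*cn)) * Real.exp (-(4*R0))) * (u*u) := by ring
  rw [h7', h7''] at h7
  linarith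

lemma sq_sub_le {t r K : ℝ} (hK : 0 ≤ K) (h : |t - r| ≤ K * |Real.log t - Real.log r|) :
    (t-r)*(t-r) ≤ K^2 * ((Real.log t - Real.log r)*(Real.log t - Real.log r)) := by
  nlinarith [abs_nonneg (t-r), abs_nonneg (Real.log t - Real.log r),
    abs_mul_abs_self (t-r), abs_mul_abs_self (Real.log t - Real.log r)]

/-! ### Sequence helpers -/

lemma tendsto_of_abs_sub {f : ℕ → ℝ} {r : ℝ}
    (h : Tendsto (fun n => |f n - r|) atTop (𝓝 0)) : Tendsto f atTop (𝓝 r) := by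
  rw [tendsto_iff_dist_tendsto_zero]
  simpa [Real.dist_eq] using h

lemma tendsto_norm_of_approx {E : Type*} [NormedAddCommGroup E] {f g : ℕ → E} {r : ℝ}
    (h : Tendsto (fun n => ‖f n - g n‖) atTop (𝓝 0)) (hg : ∀ n, ‖g n‖ = r) :
    Tendsto (fun n => ‖f n‖) atTop (𝓝 r) := by
  apply tendsto_of_abs_sub
  apply squeeze_zero (fun n => abs_nonneg _) _ h
  intro n
  calc |‖f n‖ - r| = |‖f n‖ - ‖g n‖| := by rw [hg n]
    _ ≤ ‖f n - g n‖ := abs_norm_sub_norm_le _ _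

lemma tendsto_norm_of_sq {f : ℕ → ℝ} (hf : ∀ n, 0 ≤ f n)
    (h : Tendsto (fun n => (f n)^2) atTop (𝓝 0)) : Tendsto f atTop (𝓝 0) := by
  have h2 : Tendsto (fun n => Real.sqrt ((f n)^2)) atTop (𝓝 (Real.sqrt 0)) :=
    (Real.continuous_sqrt.tendsto 0).comp h
  simpa [Real.sqrt_sq (hf _)] using h2

/-! ### Operator basics -/

lemma star_mul_self_nonneg' (T : H →L[ℂ] H) : (0:H →L[ℂ] H) ≤ adjoint T * T := by
  rw [nonneg_iff_isPositive]
  constructor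
  · exact (IsSelfAdjoint.star_mul_self T).isSymmetric
  · intro x
    rw [reApplyInnerSelf_apply]
    have : (adjoint T * T) x = adjoint T (T x) := rfl
    rw [this, adjoint_inner_left]
    simp [inner_self_eq_norm_sq]
    rw [← Complex.ofReal_pow, Complex.ofReal_re]; positivity

lemma opAbs_sq (T : H →L[ℂ] H) : opAbs T * opAbs T = adjoint T * T := by
  rw [opAbs, ← cfc_mul ..]
  have h1 : ∀ t ∈ spectrum ℝ (adjoint T * T), Real.sqrt t * Real.sqrt t = t := by
    intro t ht
    exact Real.mul_self_sqrt (spectrum_nonneg_of_nonneg (star_mul_self_nonneg' T) ht)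
  rw [cfc_congr h1, cfc_id' ℝ (adjoint T * T) (star_mul_self_nonneg' T).isSelfAdjoint]

lemma bound_spec [Nontrivial H] {S : H →L[ℂ] H} (hS : (0:H →L[ℂ] H) ≤ S) (hU : IsUnit S) :
    ∃ m M : ℝ, 0 < m ∧ spectrum ℝ S ⊆ Set.Icc m M := by
  have h0 : (0:ℝ) ∉ spectrum ℝ S := by
    rw [spectrum.zero_mem_iff]
    exact not_not.mpr hU
  have hcl : IsClosed (spectrum ℝ S) := spectrum.isClosed S
  have : (spectrum ℝ S)ᶜ ∈ 𝓝 (0:ℝ) := hcl.isOpen_compl.mem_nhds h0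
  obtain ⟨ε, hε, hball⟩ := Metric.mem_nhds_iff.mp this
  refine ⟨ε/2, ‖S‖, by positivity, fun t ht => ?_⟩
  have htn : 0 ≤ t := spectrum_nonneg_of_nonneg hS ht
  constructor
  · by_contra hlt
    push_neg at hlt
    have : t ∈ Metric.ball (0:ℝ) ε := by
      simp [Real.norm_eq_abs, abs_of_nonneg htn]
      linarith
    exact hball this ht
  · have := spectrum.norm_le_norm_of_mem ht
    rwa [Real.norm_eq_abs, abs_of_nonneg htn] at this

/-! ### State kit -/

noncomputable def phi (x : H) (X : H →L[ℂ] H) : ℝ := RCLike.re (inner ℂ (X x) x : ℂ)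

lemma phi_mono (x : H) {X Y : H →L[ℂ] H} (h : X ≤ Y) : phi x X ≤ phi x Y := by
  have h2 := (le_def X Y).mp h |>.2 x
  rw [reApplyInnerSelf_apply, sub_apply, inner_sub_left, map_sub] at h2
  unfold phi
  linarith

lemma phi_add (x : H) (X Y : H →L[ℂ] H) : phi x (X + Y) = phi x X + phi x Y := by
  unfold phi
  rw [add_apply, inner_add_left, map_add]

lemma phi_sub (x : H) (X Y : H →L[ℂ] H) : phi x (X - Y) = phi x X - phi x Y := by
  unfold phi
  rw [sub_apply, inner_sub_left, map_sub]

lemma phi_smul (x : H) (c : ℝ) (X : H →L[ℂ] H) : phi x (c • X) = c * phi x X := by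
  unfold phi
  rw [smul_apply]
  have : inner ℂ ((c • (X x) : H)) x = (starRingEnd ℂ) ((c:ℂ)) * (inner ℂ (X x) x : ℂ) := by
    rw [← inner_smul_left]
    norm_cast
  rw [this]
  simp [RCLike.smul_re]

lemma phi_algebraMap (x : H) (hx : ‖x‖ = 1) (r : ℝ) :
    phi x (algebraMap ℝ (H →L[ℂ] H) r) = r := by
  unfold phi
  rw [Algebra.algebraMap_eq_smul_one]
  rw [smul_apply, one_apply_eq_self (F := H →L[ℂ] H)]
  have : inner ℂ ((r • x : H)) x = (starRingEnd ℂ) ((r:ℂ)) * (inner ℂ x x : ℂ) := by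
    rw [← inner_smul_left]
    norm_cast
  rw [this]
  simp [inner_self_eq_norm_sq, hx]

lemma phi_sq (x : H) {X : H →L[ℂ] H} (hX : IsSelfAdjoint X) : phi x (X * X) = ‖X x‖^2 := by
  unfold phi
  have h1 : (X * X) x = X (X x) := rfl
  rw [h1]
  have hadj : adjoint X = X := hX.adjoint_eq
  have h2 : (inner ℂ (X (X x)) x : ℂ) = inner ℂ (X x) (X x) := by
    calc (inner ℂ (X (X x)) x : ℂ) = inner ℂ ((adjoint X) (X x)) x := by rw [hadj]
      _ = inner ℂ (X x) (X x) := adjoint_inner_left ..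
  rw [h2]
  exact inner_self_eq_norm_sq _

lemma phi_mul_self (x : H) (X : H →L[ℂ] H) : phi x (adjoint X * X) = ‖X x‖^2 := by
  unfold phi
  have : (adjoint X * X) x = adjoint X (X x) := rfl
  rw [this, adjoint_inner_left]
  exact inner_self_eq_norm_sq _

end LogHypAux

open LogHypAux in
theorem stmt15 (T : H →L[ℂ] H) (hT : IsLogHyponormal T) : CondStar T := by
  obtain ⟨hU, hlog⟩ := hT
  intro z x hx hcv
  rcases subsingleton_or_nontrivial H with hsub | hnt
  · exact absurd (hx 0) (by rw [Subsingleton.elim (x 0) (0:H)]; simp)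
  -- basic unit data
  set S : H →L[ℂ] H := ↑hU.unit⁻¹ with hSdef
  have hu : (hU.unit : H →L[ℂ] H) = T := hU.unit_spec
  have hST : S * T = 1 := by
    have h := hU.unit.inv_mul
    rw [hu] at h
    exact h
  have hTS : T * S = 1 := by
    have h := hU.unit.mul_inv
    rw [hu] at h
    exact h
  -- rewrite the goal's operator application
  have happly : ∀ n, (T - z • 1) (x n) = T (x n) - z • x n := by
    intro n; simp [sub_apply, smul_apply, one_apply]
  have he : Tendsto (fun n => ‖T (x n) - z • x n‖) atTop (𝓝 0) := by
    simpa [happly] using hcv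
  rcases eq_or_ne z 0 with rfl | hz
  · -- z = 0 : impossible since T is bounded below
    exfalso
    have hb : ∀ n, (1:ℝ) ≤ ‖S‖ * ‖T (x n) - (0:ℂ) • x n‖ := by
      intro n
      have h1 : S (T (x n)) = x n := by
        have : (S * T) (x n) = x n := by rw [hST]; simp
        exact this
      have h2 : (1:ℝ) = ‖S (T (x n))‖ := by rw [h1, hx n]
      calc (1:ℝ) = ‖S (T (x n))‖ := h2
        _ ≤ ‖S‖ * ‖T (x n)‖ := le_opNorm S _
        _ = ‖S‖ * ‖T (x n) - (0:ℂ) • x n‖ := by simp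
    have hlim : Tendsto (fun n => ‖S‖ * ‖T (x n) - (0:ℂ) • x n‖) atTop (𝓝 0) := by
      simpa using he.const_mul ‖S‖
    have := ge_of_tendsto' hlim (fun n => hb n)
    linarith
  -- Main case z ≠ 0
  set r := ‖z‖ with hrdef
  have hr : 0 < r := norm_pos_iff.mpr hz
  -- positivity and units
  have hTsT_pos : (0:H→L[ℂ]H) ≤ adjoint T * T := star_mul_self_nonneg' T
  have hTTs_pos : (0:H→L[ℂ]H) ≤ T * adjoint T := by
    have := star_mul_self_nonneg' (adjoint T)
    rwa [adjoint_adjoint] at this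
  have hUadj : IsUnit (adjoint T) := by
    have := hU.star
    rwa [star_eq_adjoint] at this
  have hTTs_unit : IsUnit (T * adjoint T) := hU.mul hUadj
  have hTsT_unit : IsUnit (adjoint T * T) := hUadj.mul hU
  obtain ⟨m0, M0, hm0, hsp0⟩ := bound_spec hTTs_pos hTTs_unit
  obtain ⟨m1, M1, hm1, hsp1⟩ := bound_spec hTsT_pos hTsT_unit
  set P := opAbs T with hPdef
  set Q := opAbs (adjoint T) with hQdef
  have hQeq : Q = cfc Real.sqrt (T * adjoint T) := by
    rw [hQdef, opAbs, adjoint_adjoint]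
  have hPP : P * P = adjoint T * T := opAbs_sq T
  have hQQ : Q * Q = T * adjoint T := by
    rw [hQdef]
    have := opAbs_sq (adjoint T)
    rwa [adjoint_adjoint] at this
  have hQpos : (0:H→L[ℂ]H) ≤ Q := by
    rw [hQeq]
    exact cfc_nonneg (fun t _ => Real.sqrt_nonneg t)
  have hPpos : (0:H→L[ℂ]H) ≤ P := by
    rw [hPdef, opAbs]
    exact cfc_nonneg (fun t _ => Real.sqrt_nonneg t)
  have hQsa : IsSelfAdjoint Q := hQpos.isSelfAdjoint
  have hPsa : IsSelfAdjoint P := hPpos.isSelfAdjoint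
  -- spectra
  have hQspec : spectrum ℝ Q = Real.sqrt '' spectrum ℝ (T * adjoint T) := by
    rw [hQeq]
    exact cfc_map_spectrum Real.sqrt (T * adjoint T) hTTs_pos.isSelfAdjoint
      Real.continuous_sqrt.continuousOn
  have hPspec : spectrum ℝ P = Real.sqrt '' spectrum ℝ (adjoint T * T) := by
    rw [hPdef, opAbs]
    exact cfc_map_spectrum Real.sqrt (adjoint T * T) hTsT_pos.isSelfAdjoint
      Real.continuous_sqrt.continuousOn
  set m := Real.sqrt m0 with hmdef
  set M := Real.sqrt M0 with hMdef
  have hm : 0 < m := Real.sqrt_pos.mpr hm0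
  have hQsub : ∀ t ∈ spectrum ℝ Q, m ≤ t ∧ t ≤ M := by
    intro t ht
    rw [hQspec] at ht
    obtain ⟨s, hs, rfl⟩ := ht
    obtain ⟨h1, h2⟩ := hsp0 hs
    exact ⟨Real.sqrt_le_sqrt h1, Real.sqrt_le_sqrt h2⟩
  have hQt_pos : ∀ t ∈ spectrum ℝ Q, 0 < t := fun t ht => lt_of_lt_of_le hm (hQsub t ht).1
  have hPt_pos : ∀ t ∈ spectrum ℝ P, 0 < t := by
    intro t ht
    rw [hPspec] at ht
    obtain ⟨s, hs, rfl⟩ := ht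
    exact Real.sqrt_pos.mpr (lt_of_lt_of_le hm1 (hsp1 hs).1)
  have hlogQcont : ContinuousOn Real.log (spectrum ℝ Q) :=
    Real.continuousOn_log.mono (fun t ht => by
      simp only [Set.mem_compl_iff, Set.mem_singleton_iff]
      exact (hQt_pos t ht).ne')
  have hlogPcont : ContinuousOn Real.log (spectrum ℝ P) :=
    Real.continuousOn_log.mono (fun t ht => by
      simp only [Set.mem_compl_iff, Set.mem_singleton_iff]
      exact (hPt_pos t ht).ne')
  set LQ := cfc Real.log Q with hLQdef
  set LP := cfc Real.log P with hLPdef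
  have hLQsa : IsSelfAdjoint LQ := cfc_predicate Real.log Q
  -- limits of the basic norms
  have hTx : Tendsto (fun n => ‖T (x n)‖) atTop (𝓝 r) := by
    apply tendsto_norm_of_approx he
    intro n
    rw [norm_smul, hx n, mul_one]
  have hSx : Tendsto (fun n => ‖S (x n)‖) atTop (𝓝 r⁻¹) := by
    have hSTapp : ∀ v, S (T v) = v := by
      intro v
      have : (S * T) v = v := by rw [hST]; simp
      exact this
    have hd : Tendsto (fun n => ‖S (x n) - z⁻¹ • x n‖) atTop (𝓝 0) := by
      have hcm : Tendsto (fun k => ‖z⁻¹‖ * ‖S‖ * ‖T (x k) - z • x k‖) atTop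
          (𝓝 (‖z⁻¹‖ * ‖S‖ * 0)) := he.const_mul _
      rw [mul_zero] at hcm
      apply squeeze_zero (fun n => norm_nonneg _) _ hcm
      intro n
      have hkey : S (x n) - z⁻¹ • x n = (-z⁻¹) • S (T (x n) - z • x n) := by
        rw [map_sub, hSTapp, map_smul, smul_sub, smul_smul, neg_mul, inv_mul_cancel₀ hz]
        module
      rw [hkey, norm_smul]
      simp only [norm_neg]
      calc ‖z⁻¹‖ * ‖S (T (x n) - z • x n)‖ ≤ ‖z⁻¹‖ * (‖S‖ * ‖T (x n) - z • x n‖) := by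
            apply mul_le_mul_of_nonneg_left (le_opNorm S _) (norm_nonneg _)
        _ = ‖z⁻¹‖ * ‖S‖ * ‖T (x n) - z • x n‖ := by ring
    apply tendsto_norm_of_approx hd
    intro n
    rw [norm_smul, hx n, mul_one, norm_inv]
  -- moments
  have haP : Tendsto (fun n => phi (x n) (P * P)) atTop (𝓝 (r^2)) := by
    have heq : ∀ n, phi (x n) (P * P) = ‖T (x n)‖^2 := by
      intro n; rw [hPP]; exact phi_mul_self (x n) T
    simp only [heq]
    exact hTx.pow 2
  -- inverse moment
  set W := cfc (fun t : ℝ => (t * t)⁻¹) Q with hWdef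
  have hQQc : cfc (fun t : ℝ => t * t) Q = Q * Q := by
    rw [cfc_mul (fun t : ℝ => t) (fun t : ℝ => t) Q (by fun_prop) (by fun_prop),
      cfc_id' ℝ Q hQsa]
  have hWcont : ContinuousOn (fun t : ℝ => (t*t)⁻¹) (spectrum ℝ Q) := by
    apply ContinuousOn.inv₀ (continuousOn_id.mul continuousOn_id)
    intro t ht
    exact mul_ne_zero (hQt_pos t ht).ne' (hQt_pos t ht).ne'
  have hWmul : W * (Q * Q) = 1 := by
    rw [hWdef, ← hQQc,
      ← cfc_mul (fun t : ℝ => (t*t)⁻¹) (fun t : ℝ => t*t) Q hWcont (by fun_prop)]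
    have : ∀ t ∈ spectrum ℝ Q, (t*t)⁻¹ * (t*t) = 1 := by
      intro t ht
      exact inv_mul_cancel₀ (mul_ne_zero (hQt_pos t ht).ne' (hQt_pos t ht).ne')
    rw [cfc_congr this, cfc_const_one ℝ Q hQsa]
  have hadjTS : adjoint T * adjoint S = 1 := by
    calc adjoint T * adjoint S = star T * star S := by rw [star_eq_adjoint, star_eq_adjoint]
      _ = star (S * T) := (star_mul S T).symm
      _ = 1 := by rw [hST, star_one]
  have hVinv : (T * adjoint T) * (adjoint S * S) = 1 := by
    calc (T * adjoint T) * (adjoint S * S) = T * ((adjoint T * adjoint S) * S) := by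
          rw [mul_assoc, mul_assoc]
      _ = T * S := by rw [hadjTS, one_mul]
      _ = 1 := hTS
  have hWV : W = adjoint S * S := by
    calc W = W * ((T * adjoint T) * (adjoint S * S)) := by rw [hVinv, mul_one]
      _ = (W * (T * adjoint T)) * (adjoint S * S) := (mul_assoc _ _ _).symm
      _ = (W * (Q * Q)) * (adjoint S * S) := by rw [hQQ]
      _ = adjoint S * S := by rw [hWmul, one_mul]
  have hbW : Tendsto (fun n => phi (x n) W) atTop (𝓝 (r⁻¹^2)) := by
    have heq : ∀ n, phi (x n) W = ‖S (x n)‖^2 := by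
      intro n; rw [hWV]; exact phi_mul_self (x n) S
    simp only [heq]
    exact hSx.pow 2
  -- c sequence
  set c : ℕ → ℝ := fun n => phi (x n) LQ with hcdef
  have hLQ_lb : algebraMap ℝ (H →L[ℂ] H) (Real.log m) ≤ LQ := by
    rw [hLQdef, ← cfc_const (Real.log m) Q hQsa]
    exact cfc_mono (fun t ht => Real.log_le_log hm (hQsub t ht).1)
      continuousOn_const hlogQcont
  have hLQ_ub : LQ ≤ algebraMap ℝ (H →L[ℂ] H) (Real.log M) := by
    rw [hLQdef, ← cfc_const (Real.log M) Q hQsa]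
    exact cfc_mono (fun t ht => Real.log_le_log (hQt_pos t ht) (hQsub t ht).2)
      hlogQcont continuousOn_const
  have hclb : ∀ n, Real.log m ≤ c n := by
    intro n
    have := phi_mono (x n) hLQ_lb
    rwa [phi_algebraMap (x n) (hx n)] at this
  have hcub : ∀ n, c n ≤ Real.log M := by
    intro n
    have := phi_mono (x n) hLQ_ub
    rwa [phi_algebraMap (x n) (hx n)] at this
  set R0 := max |Real.log m| |Real.log M| with hR0def
  have hcR : ∀ n, |c n| ≤ R0 := by
    intro n
    rw [abs_le]
    constructor
    · have : -R0 ≤ -|Real.log m| := neg_le_neg (le_max_left _ _)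
      have h2 : -|Real.log m| ≤ Real.log m := neg_abs_le _
      linarith [hclb n]
    · have : |Real.log M| ≤ R0 := le_max_right _ _
      have h2 : Real.log M ≤ |Real.log M| := le_abs_self _
      linarith [hcub n]
  have hlogt : ∀ t ∈ spectrum ℝ Q, |Real.log t| ≤ R0 := by
    intro t ht
    rw [abs_le]
    constructor
    · have h1 : Real.log m ≤ Real.log t := Real.log_le_log hm (hQsub t ht).1
      have : -R0 ≤ -|Real.log m| := neg_le_neg (le_max_left _ _)
      linarith [neg_abs_le (Real.log m)]
    · have h1 : Real.log t ≤ Real.log M := Real.log_le_log (hQt_pos t ht) (hQsub t ht).2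
      linarith [le_abs_self (Real.log M), le_max_right |Real.log m| |Real.log M|]
  -- upper squeeze for c
  have hupper : ∀ n, c n ≤ (Real.log (r^2) - 1 + (r^2)⁻¹ * phi (x n) (P * P))/2 := by
    intro n
    have hop : cfc (fun t : ℝ => 2 * Real.log t) P
        ≤ cfc (fun t : ℝ => Real.log (r^2) - 1 + (r^2)⁻¹ * (t * t)) P := by
      apply cfc_mono
      · intro t ht
        have ht0 := hPt_pos t ht
        have h1 : 2 * Real.log t = Real.log (t * t) := by
          rw [Real.log_mul ht0.ne' ht0.ne']; ring
        rw [h1]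
        have := log_tangent (mul_pos ht0 ht0) (by positivity : (0:ℝ) < r^2)
        linarith
      · exact continuousOn_const.mul hlogPcont
      · exact continuousOn_const.add (continuousOn_const.mul (continuousOn_id.mul continuousOn_id))
    have hL : cfc (fun t : ℝ => 2 * Real.log t) P = (2:ℝ) • LP := by
      rw [hLPdef, ← cfc_const_mul 2 Real.log P hlogPcont]
    have hRt : cfc (fun t : ℝ => Real.log (r^2) - 1 + (r^2)⁻¹ * (t * t)) P
        = algebraMap ℝ (H →L[ℂ] H) (Real.log (r^2) - 1) + (r^2)⁻¹ • (P * P) := by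
      rw [cfc_const_add (a := P) (r := Real.log (r^2) - 1)
          (f := fun t : ℝ => (r^2)⁻¹ * (t * t)) (by fun_prop) hPsa,
        cfc_const_mul (a := P) (r := (r^2)⁻¹) (f := fun t : ℝ => t * t) (by fun_prop),
        cfc_mul (fun t : ℝ => t) (fun t : ℝ => t) P (by fun_prop) (by fun_prop),
        cfc_id' ℝ P hPsa]
    rw [hL, hRt] at hop
    have hphi := phi_mono (x n) hop
    rw [phi_smul, phi_add, phi_algebraMap (x n) (hx n), phi_smul] at hphi
    have hcLP : c n ≤ phi (x n) LP := phi_mono (x n) hlog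
    linarith
  -- lower squeeze for c
  have hlower : ∀ n, -((Real.log (r⁻¹^2) - 1 + (r⁻¹^2)⁻¹ * phi (x n) W))/2 ≤ c n := by
    intro n
    have hop : cfc (fun t : ℝ => (-2) * Real.log t) Q
        ≤ cfc (fun t : ℝ => Real.log (r⁻¹^2) - 1 + (r⁻¹^2)⁻¹ * ((t*t)⁻¹)) Q := by
      apply cfc_mono
      · intro t ht
        have ht0 := hQt_pos t ht
        have h1 : (-2) * Real.log t = Real.log ((t * t)⁻¹) := by
          rw [Real.log_inv, Real.log_mul ht0.ne' ht0.ne']; ring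
        rw [h1]
        have := log_tangent (t := (t*t)⁻¹) (s := r⁻¹^2) (by positivity) (by positivity)
        linarith
      · exact continuousOn_const.mul hlogQcont
      · exact continuousOn_const.add (continuousOn_const.mul hWcont)
    have hL : cfc (fun t : ℝ => (-2) * Real.log t) Q = (-2:ℝ) • LQ := by
      rw [hLQdef, ← cfc_const_mul (-2) Real.log Q hlogQcont]
    have hRt : cfc (fun t : ℝ => Real.log (r⁻¹^2) - 1 + (r⁻¹^2)⁻¹ * ((t*t)⁻¹)) Q
        = algebraMap ℝ (H →L[ℂ] H) (Real.log (r⁻¹^2) - 1) + (r⁻¹^2)⁻¹ • W := by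
      rw [cfc_const_add (a := Q) (r := Real.log (r⁻¹^2) - 1)
          (f := fun t : ℝ => (r⁻¹^2)⁻¹ * ((t*t)⁻¹)) (continuousOn_const.mul hWcont) hQsa,
        cfc_const_mul (a := Q) (r := (r⁻¹^2)⁻¹) (f := fun t : ℝ => (t*t)⁻¹) hWcont, hWdef]
    rw [hL, hRt] at hop
    have hphi := phi_mono (x n) hop
    rw [phi_smul, phi_add, phi_algebraMap (x n) (hx n), phi_smul] at hphi
    linarith
  -- c tends to log r
  have hc : Tendsto c atTop (𝓝 (Real.log r)) := by
    have hu : Tendsto (fun n => (Real.log (r^2) - 1 + (r^2)⁻¹ * phi (x n) (P * P))/2)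
        atTop (𝓝 (Real.log r)) := by
      have h1 : Tendsto (fun n => Real.log (r^2) - 1 + (r^2)⁻¹ * phi (x n) (P * P))
          atTop (𝓝 (Real.log (r^2) - 1 + (r^2)⁻¹ * r^2)) :=
        tendsto_const_nhds.add (haP.const_mul _)
      have h2 : (Real.log (r^2) - 1 + (r^2)⁻¹ * r^2)/2 = Real.log r := by
        rw [inv_mul_cancel₀ (by positivity : (r:ℝ)^2 ≠ 0)]
        rw [Real.log_pow]
        push_cast
        ring
      have := h1.div_const 2
      rwa [h2] at this
    have hl : Tendsto (fun n => -((Real.log (r⁻¹^2) - 1 + (r⁻¹^2)⁻¹ * phi (x n) W))/2)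
        atTop (𝓝 (Real.log r)) := by
      have h1 : Tendsto (fun n => Real.log (r⁻¹^2) - 1 + (r⁻¹^2)⁻¹ * phi (x n) W)
          atTop (𝓝 (Real.log (r⁻¹^2) - 1 + (r⁻¹^2)⁻¹ * r⁻¹^2)) :=
        tendsto_const_nhds.add (hbW.const_mul _)
      have h2 : -((Real.log (r⁻¹^2) - 1 + (r⁻¹^2)⁻¹ * r⁻¹^2))/2 = Real.log r := by
        rw [inv_mul_cancel₀ (by positivity : (r⁻¹:ℝ)^2 ≠ 0)]
        rw [Real.log_pow, Real.log_inv]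
        push_cast
        ring
      have := (h1.neg).div_const 2
      rw [h2] at this
      exact this
    exact tendsto_of_tendsto_of_tendsto_of_le_of_le hl hu hlower hupper
  -- the convexity estimate
  set κ := 2 * Real.exp (-(2*R0)) * Real.exp (-(4*R0)) with hκdef
  have hκ : 0 < κ := by positivity
  set D : ℕ → (H →L[ℂ] H) := fun n => LQ - algebraMap ℝ (H →L[ℂ] H) (c n) with hDdef
  have halgsa : ∀ s : ℝ, IsSelfAdjoint (algebraMap ℝ (H →L[ℂ] H) s) := by
    intro s
    rw [Algebra.algebraMap_eq_smul_one]
    exact IsSelfAdjoint.smul (star_trivial s) (IsSelfAdjoint.one _)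
  have hDsa : ∀ n, IsSelfAdjoint (D n) := fun n => hLQsa.sub (halgsa (c n))
  have hkey : ∀ n, Real.exp (-(2 * c n)) + κ * ‖(D n) (x n)‖^2 ≤ phi (x n) W := by
    intro n
    have hgc : ContinuousOn (fun t : ℝ => Real.log t - c n) (spectrum ℝ Q) :=
      hlogQcont.sub continuousOn_const
    have hop : cfc (fun t : ℝ => Real.exp (-(2 * c n))
        + (-2 * Real.exp (-(2 * c n))) * (Real.log t - c n)
        + κ * ((Real.log t - c n) * (Real.log t - c n))) Q ≤ W := by
      rw [hWdef]
      apply cfc_mono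
      · intro t ht
        have ht0 := hQt_pos t ht
        have hL := hlogt t ht
        have hinv : (t*t)⁻¹ = Real.exp (-(2 * Real.log t)) := by
          rw [show -(2*Real.log t) = -Real.log t + -Real.log t by ring,
            Real.exp_add, Real.exp_neg, Real.exp_log ht0, mul_inv]
        rw [hinv]
        exact key_pointwise (hcR n) hL
      · exact (continuousOn_const.add (continuousOn_const.mul hgc)).add
          (continuousOn_const.mul (hgc.mul hgc))
      · exact hWcont
    have hcfcD : cfc (fun t : ℝ => Real.log t - c n) Q = D n := by
      rw [hDdef]
      rw [cfc_sub (a := Q) (f := Real.log) (g := fun _ : ℝ => c n) hlogQcont continuousOn_const,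
        cfc_const (c n) Q hQsa, hLQdef]
    have hdecomp : cfc (fun t : ℝ => Real.exp (-(2 * c n))
        + (-2 * Real.exp (-(2 * c n))) * (Real.log t - c n)
        + κ * ((Real.log t - c n) * (Real.log t - c n))) Q
        = algebraMap ℝ (H →L[ℂ] H) (Real.exp (-(2 * c n)))
          + ((-2 * Real.exp (-(2 * c n))) • (D n) + κ • ((D n) * (D n))) := by
      have e1 : (fun t : ℝ => Real.exp (-(2 * c n))
          + (-2 * Real.exp (-(2 * c n))) * (Real.log t - c n)
          + κ * ((Real.log t - c n) * (Real.log t - c n)))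
          = (fun t : ℝ => Real.exp (-(2 * c n))
          + ((-2 * Real.exp (-(2 * c n))) * (Real.log t - c n)
          + κ * ((Real.log t - c n) * (Real.log t - c n)))) := by
        funext t; ring
      rw [e1]
      rw [cfc_const_add (a := Q) (r := Real.exp (-(2 * c n)))
          (f := fun t : ℝ => (-2 * Real.exp (-(2 * c n))) * (Real.log t - c n)
            + κ * ((Real.log t - c n) * (Real.log t - c n)))
          ((continuousOn_const.mul hgc).add (continuousOn_const.mul (hgc.mul hgc))) hQsa]
      congr 1
      rw [cfc_add (a := Q) (f := fun t : ℝ => (-2 * Real.exp (-(2 * c n))) * (Real.log t - c n))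
          (g := fun t : ℝ => κ * ((Real.log t - c n) * (Real.log t - c n)))
          (continuousOn_const.mul hgc) (continuousOn_const.mul (hgc.mul hgc))]
      congr 1
      · rw [cfc_const_mul (a := Q) (r := -2 * Real.exp (-(2 * c n)))
          (f := fun t : ℝ => Real.log t - c n) hgc, hcfcD]
      · rw [cfc_const_mul (a := Q) (r := κ)
          (f := fun t : ℝ => (Real.log t - c n) * (Real.log t - c n)) (hgc.mul hgc),
          cfc_mul (fun t : ℝ => Real.log t - c n) (fun t : ℝ => Real.log t - c n) Q hgc hgc,
          hcfcD]
    rw [hdecomp] at hop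
    have hphi := phi_mono (x n) hop
    rw [phi_add, phi_add, phi_algebraMap (x n) (hx n), phi_smul, phi_smul,
      phi_sq (x n) (hDsa n)] at hphi
    have hphiD : phi (x n) (D n) = 0 := by
      rw [hDdef]
      rw [phi_sub, phi_algebraMap (x n) (hx n)]
      simp [hcdef]
    rw [hphiD] at hphi
    simpa using hphi
  -- norm of D n (x n) tends to 0
  have hexp : Tendsto (fun n => Real.exp (-(2 * c n))) atTop (𝓝 (r⁻¹^2)) := by
    have h1 : Tendsto (fun n => -(2 * c n)) atTop (𝓝 (-(2 * Real.log r))) :=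
      (hc.const_mul 2).neg
    have h2 := (Real.continuous_exp.tendsto _).comp h1
    have h3 : Real.exp (-(2 * Real.log r)) = r⁻¹^2 := by
      rw [show -(2*Real.log r) = Real.log r⁻¹ + Real.log r⁻¹ by rw [Real.log_inv]; ring,
        Real.exp_add, Real.exp_log (by positivity)]
      ring
    rwa [h3] at h2
  have hDlim2 : Tendsto (fun n => ‖(D n) (x n)‖^2) atTop (𝓝 0) := by
    have hbound : ∀ n, ‖(D n) (x n)‖^2 ≤ (phi (x n) W - Real.exp (-(2 * c n)))/κ := by
      intro n
      rw [le_div_iff₀ hκ]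
      have := hkey n
      linarith [hkey n]
    have hlim : Tendsto (fun n => (phi (x n) W - Real.exp (-(2 * c n)))/κ) atTop (𝓝 0) := by
      have h1 : Tendsto (fun n => phi (x n) W - Real.exp (-(2 * c n))) atTop (𝓝 0) := by
        have := hbW.sub hexp
        simpa using this
      simpa using h1.div_const κ
    exact squeeze_zero (fun n => by positivity) hbound hlim
  have hD0 : Tendsto (fun n => ‖(D n) (x n)‖) atTop (𝓝 0) :=
    tendsto_norm_of_sq (fun n => norm_nonneg _) hDlim2
  -- replace c n by log r
  set D' : H →L[ℂ] H := LQ - algebraMap ℝ (H →L[ℂ] H) (Real.log r) with hD'def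
  have hD'sa : IsSelfAdjoint D' := hLQsa.sub (halgsa _)
  have hD'0 : Tendsto (fun n => ‖D' (x n)‖) atTop (𝓝 0) := by
    have hbound : ∀ n, ‖D' (x n)‖ ≤ ‖(D n) (x n)‖ + |c n - Real.log r| := by
      intro n
      have heq : D' = D n + algebraMap ℝ (H →L[ℂ] H) (c n - Real.log r) := by
        rw [hD'def, hDdef, map_sub]
        exact (sub_add_sub_cancel _ _ _).symm
      rw [heq]
      have happ : (D n + algebraMap ℝ (H →L[ℂ] H) (c n - Real.log r)) (x n)
          = (D n) (x n) + (c n - Real.log r) • (x n) := by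
        rw [add_apply, Algebra.algebraMap_eq_smul_one, smul_apply, one_apply_eq_self (F := H →L[ℂ] H)]
      rw [happ]
      calc ‖(D n) (x n) + (c n - Real.log r) • (x n)‖
          ≤ ‖(D n) (x n)‖ + ‖(c n - Real.log r) • (x n)‖ := norm_add_le _ _
        _ = ‖(D n) (x n)‖ + |c n - Real.log r| := by
            rw [norm_smul, hx n, mul_one, Real.norm_eq_abs]
    have hlim : Tendsto (fun n => ‖(D n) (x n)‖ + |c n - Real.log r|) atTop (𝓝 0) := by
      have h1 : Tendsto (fun n => c n - Real.log r) atTop (𝓝 0) := by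
        simpa using hc.sub (tendsto_const_nhds (x := Real.log r))
      have h2 : Tendsto (fun n => |c n - Real.log r|) atTop (𝓝 0) := by
        simpa using h1.abs
      simpa using hD0.add h2
    exact squeeze_zero (fun n => norm_nonneg _) hbound hlim
  -- transfer to Q
  set E : H →L[ℂ] H := Q - algebraMap ℝ (H →L[ℂ] H) r with hEdef
  have hEsa : IsSelfAdjoint E := hQsa.sub (halgsa _)
  set C := (max M r)^2 with hCdef
  have hop2 : E * E ≤ C • (D' * D') := by
    have hgc : ContinuousOn (fun t : ℝ => Real.log t - Real.log r) (spectrum ℝ Q) :=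
      hlogQcont.sub continuousOn_const
    have hid : ContinuousOn (fun t : ℝ => t - r) (spectrum ℝ Q) :=
      continuousOn_id.sub continuousOn_const
    have hcfcE : cfc (fun t : ℝ => t - r) Q = E := by
      rw [hEdef, cfc_sub (a := Q) (f := fun t : ℝ => t) (g := fun _ : ℝ => r)
        (by fun_prop) continuousOn_const, cfc_const r Q hQsa, cfc_id' ℝ Q hQsa]
    have hcfcD' : cfc (fun t : ℝ => Real.log t - Real.log r) Q = D' := by
      rw [hD'def, cfc_sub (a := Q) (f := Real.log) (g := fun _ : ℝ => Real.log r)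
        hlogQcont continuousOn_const, cfc_const _ Q hQsa, hLQdef]
    have h1 : cfc (fun t : ℝ => (t - r) * (t - r)) Q
        ≤ cfc (fun t : ℝ => C * ((Real.log t - Real.log r) * (Real.log t - Real.log r))) Q := by
      apply cfc_mono
      · intro t ht
        have ht0 := hQt_pos t ht
        have habs : |t - r| ≤ max M r * |Real.log t - Real.log r| := by
          have h2 := abs_sub_le_max_mul_log ht0 hr
          have h3 : max t r ≤ max M r := max_le_max (hQsub t ht).2 le_rfl
          calc |t - r| ≤ max t r * |Real.log t - Real.log r| := h2
            _ ≤ max M r * |Real.log t - Real.log r| := by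
                apply mul_le_mul_of_nonneg_right h3 (abs_nonneg _)
        exact sq_sub_le (le_trans hr.le (le_max_right M r)) habs
      · exact hid.mul hid
      · exact continuousOn_const.mul (hgc.mul hgc)
    rw [cfc_mul (fun t : ℝ => t - r) (fun t : ℝ => t - r) Q hid hid, hcfcE] at h1
    rw [cfc_const_mul (a := Q) (r := C)
        (f := fun t : ℝ => (Real.log t - Real.log r) * (Real.log t - Real.log r)) (hgc.mul hgc),
      cfc_mul (fun t : ℝ => Real.log t - Real.log r) (fun t : ℝ => Real.log t - Real.log r)
        Q hgc hgc, hcfcD'] at h1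
    exact h1
  have hEx : Tendsto (fun n => ‖E (x n)‖) atTop (𝓝 0) := by
    apply tendsto_norm_of_sq (fun n => norm_nonneg _)
    have hbound : ∀ n, ‖E (x n)‖^2 ≤ C * ‖D' (x n)‖^2 := by
      intro n
      have := phi_mono (x n) hop2
      rwa [phi_sq (x n) hEsa, phi_smul, phi_sq (x n) hD'sa] at this
    apply squeeze_zero (fun n => by positivity) hbound
    have := (hD'0.pow 2).const_mul C
    simpa using this
  -- ‖Q x n‖ → r
  have hQx : Tendsto (fun n => ‖Q (x n)‖) atTop (𝓝 r) := by
    have hdiff : Tendsto (fun n => ‖Q (x n) - r • (x n)‖) atTop (𝓝 0) := by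
      have happ : ∀ n, E (x n) = Q (x n) - (r:ℝ) • (x n) := by
        intro n
        rw [hEdef, sub_apply, Algebra.algebraMap_eq_smul_one, smul_apply, one_apply_eq_self (F := H →L[ℂ] H)]
      simpa [happ] using hEx
    apply tendsto_norm_of_approx hdiff
    intro n
    rw [norm_smul, hx n, mul_one, Real.norm_eq_abs, abs_of_pos hr]
  -- ‖T* x n‖ → r
  have hTstarX : Tendsto (fun n => ‖adjoint T (x n)‖) atTop (𝓝 r) := by
    have heq : ∀ n, ‖adjoint T (x n)‖ = ‖Q (x n)‖ := by
      intro n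
      have h1 : phi (x n) (T * adjoint T) = ‖adjoint T (x n)‖^2 := by
        have := phi_mul_self (x n) (adjoint T)
        rwa [adjoint_adjoint] at this
      have h2 : phi (x n) (T * adjoint T) = ‖Q (x n)‖^2 := by
        rw [← hQQ]
        exact phi_sq (x n) hQsa
      have h3 : ‖adjoint T (x n)‖^2 = ‖Q (x n)‖^2 := by rw [← h1, h2]
      exact (sq_eq_sq₀ (norm_nonneg _) (norm_nonneg _)).mp h3
    simp only [heq]
    exact hQx
  -- inner products converge
  have hinner : Tendsto (fun n => (inner ℂ (x n) (T (x n)) : ℂ)) atTop (𝓝 z) := by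
    rw [tendsto_iff_dist_tendsto_zero]
    apply squeeze_zero (fun n => dist_nonneg) _ he
    intro n
    rw [Complex.dist_eq]
    have h1 : (inner ℂ (x n) (T (x n)) : ℂ) - z = inner ℂ (x n) (T (x n) - z • (x n)) := by
      rw [inner_sub_right, inner_smul_right]
      have h2 : (inner ℂ (x n) (x n) : ℂ) = 1 := by
        rw [inner_self_eq_norm_sq_to_K, hx n]
        norm_num
      rw [h2, mul_one]
    rw [h1]
    calc ‖(inner ℂ (x n) (T (x n) - z • (x n)) : ℂ)‖
        = ‖(inner ℂ (x n) (T (x n) - z • (x n)) : ℂ)‖ := rfl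
      _ ≤ ‖x n‖ * ‖T (x n) - z • (x n)‖ := norm_inner_le_norm _ _
      _ = ‖T (x n) - z • (x n)‖ := by rw [hx n, one_mul]
  -- final assembly
  have hadj_eq : adjoint (T - z • 1) = adjoint T - (starRingEnd ℂ z) • 1 := by
    rw [map_sub]
    congr 1
    rw [map_smulₛₗ]
    congr 1
    rw [one_def, adjoint_id]
  have hfinal2 : Tendsto (fun n => ‖adjoint T (x n) - (starRingEnd ℂ z) • (x n)‖^2)
      atTop (𝓝 0) := by
    have hexpand : ∀ n, ‖adjoint T (x n) - (starRingEnd ℂ z) • (x n)‖^2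
        = ‖adjoint T (x n)‖^2
          - 2 * RCLike.re ((starRingEnd ℂ z) * (inner ℂ (x n) (T (x n)) : ℂ)) + r^2 := by
      intro n
      have h1 : (inner ℂ (adjoint T (x n)) ((starRingEnd ℂ z) • (x n)) : ℂ)
          = (starRingEnd ℂ z) * inner ℂ (x n) (T (x n)) := by
        rw [inner_smul_right, adjoint_inner_left]
      have h2 : ‖(starRingEnd ℂ z) • (x n)‖ = r := by
        rw [norm_smul, hx n, mul_one, RCLike.norm_conj]
      have h0 := norm_sub_sq (𝕜 := ℂ) (adjoint T (x n)) ((starRingEnd ℂ z) • (x n))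
      rw [h1, h2] at h0
      rw [h0]
    simp only [hexpand]
    have hre : Tendsto (fun n => RCLike.re ((starRingEnd ℂ z) * (inner ℂ (x n) (T (x n)) : ℂ)))
        atTop (𝓝 (RCLike.re ((starRingEnd ℂ z) * z))) := by
      have h1 : Tendsto (fun n => (starRingEnd ℂ z) * (inner ℂ (x n) (T (x n)) : ℂ))
          atTop (𝓝 ((starRingEnd ℂ z) * z)) := hinner.const_mul _
      exact (RCLike.continuous_re.tendsto _).comp h1
    have hzz : RCLike.re ((starRingEnd ℂ z) * z) = r^2 := by
      have : (starRingEnd ℂ z) * z = (‖z‖^2 : ℂ) := by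
        rw [mul_comm, Complex.mul_conj']
      rw [this]
      norm_cast
    have hcomb : Tendsto (fun n => ‖adjoint T (x n)‖^2
        - 2 * RCLike.re ((starRingEnd ℂ z) * (inner ℂ (x n) (T (x n)) : ℂ)) + r^2)
        atTop (𝓝 (r^2 - 2 * (r^2) + r^2)) := by
      have := ((hTstarX.pow 2).sub (hre.const_mul 2)).add
        (tendsto_const_nhds (x := r^2))
      rwa [hzz] at this
    have hzero : (r^2 - 2 * (r^2) + r^2 : ℝ) = 0 := by ring
    rwa [hzero] at hcomb
  have happly2 : ∀ n, adjoint (T - z • 1) (x n)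
      = adjoint T (x n) - (starRingEnd ℂ z) • (x n) := by
    intro n; rw [hadj_eq, sub_apply, smul_apply, one_apply_eq_self (F := H →L[ℂ] H)]
  simp only [happly2]
  exact tendsto_norm_of_sq (fun n => norm_nonneg _) hfinal2
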